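/- Let k be a field, V a finite-dimensional k-vector space, π : V* → V a skew-symmetric linear map, and ψ an alternating trilinear form on V. Fix a basis (e_i) of V with dual basis (ε^i) and define ξ ∈ V* by ξ(X) = Σ_i ψ(π ε^i, e_i, X). Then for every α ∈ V*: α(π ξ) = −Tr(Ψ_α), where Tr denotes the trace of the endomorphism Ψ_α of V*. In particular, the vector π ξ ∈ V is independent of the choice of basis. (This is the paper's Proposition stating that the vector field Y_{π,ψ} = π♯(i_π ψ) satisfies ⟨α, Y_{π,ψ}⟩ = ½ Tr Ψ_α, up to the paper's normalization of the interior product i_π ψ.) -/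

import Mathlib

/-!
Skew-symmetry of `π` gives `α(π ξ) = -ξ(π α) = -Σ_i ψ(π εⁱ, e_i, π α)`. Since an alternating
trilinear form is invariant under cyclic permutation of its arguments, the summand equals
`ψ(π α, π εⁱ, e_i) = (Ψ_α εⁱ)(e_i)`, and the sum of these is the trace of `Ψ_α` computed in the
dual basis. The trace does not depend on the basis, and linear forms separate vectors, so neither
does `π ξ`.
-/

/-- The linear form `ξ(X) = Σ_i ψ(π εⁱ, e_i, X)` associated to a basis `(e_i)` with dual
basis `(εⁱ)`; it is the contraction `i_π ψ` (up to normalization). -/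
noncomputable def xiForm {k V ι : Type*} [Field k] [AddCommGroup V] [Module k V] [Fintype ι]
    (π : Module.Dual k V →ₗ[k] V) (ψ : V →ₗ[k] V →ₗ[k] V →ₗ[k] k)
    (b : Module.Basis ι k V) : Module.Dual k V :=
  ∑ i, ψ (π (b.coord i)) (b i)

/-- The endomorphism `Ψ_α` of `V*` defined by `(Ψ_α β)(X) = ψ(π α, π β, X)`. -/
noncomputable def PsiEndo {k V : Type*} [Field k] [AddCommGroup V] [Module k V]
    (π : Module.Dual k V →ₗ[k] V) (ψ : V →ₗ[k] V →ₗ[k] V →ₗ[k] k)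
    (α : Module.Dual k V) : Module.Dual k V →ₗ[k] Module.Dual k V :=
  (ψ (π α)) ∘ₗ π

section Trilinear

variable {R M N : Type*} [CommSemiring R] [AddCommMonoid M] [Module R M]
  [AddCommGroup N] [Module R N] (ψ : M →ₗ[R] M →ₗ[R] M →ₗ[R] N)

theorem LinearMap.trilinear_swap₁₂ (h : ∀ x y, ψ x x y = 0) (x y z : M) :
    ψ x y z = -ψ y x z := by
  have hxy := h (x + y) z
  simp only [map_add, LinearMap.add_apply, h, zero_add, add_zero] at hxy
  exact eq_neg_of_add_eq_zero_right hxy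

theorem LinearMap.trilinear_swap₁₃ (h : ∀ x y, ψ x y x = 0) (x y z : M) :
    ψ x y z = -ψ z y x := by
  have hxz := h (x + z) y
  simp only [map_add, LinearMap.add_apply, h, zero_add, add_zero] at hxz
  exact eq_neg_of_add_eq_zero_right hxz

theorem LinearMap.trilinear_rotate (h₁₂ : ∀ x y, ψ x x y = 0) (h₁₃ : ∀ x y, ψ x y x = 0)
    (x y z : M) : ψ x y z = ψ z x y := by
  rw [ψ.trilinear_swap₁₃ h₁₃ z x y, ψ.trilinear_swap₁₂ h₁₂ y x z, neg_neg]

end Trilinear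

theorem Module.Basis.trace_dual_eq_sum_coord {R M ι : Type*} [CommRing R] [AddCommGroup M]
    [Module R M] [Fintype ι] (b : Module.Basis ι R M)
    (f : Module.Dual R M →ₗ[R] Module.Dual R M) :
    LinearMap.trace R (Module.Dual R M) f = ∑ i, f (b.coord i) (b i) := by
  classical
  rw [LinearMap.trace_eq_matrix_trace R b.dualBasis, Matrix.trace]
  simp [LinearMap.toMatrix_apply, Module.Basis.dualBasis_repr, Matrix.diag]

section XiForm

variable {k V ι : Type*} [Field k] [AddCommGroup V] [Module k V] [Fintype ι]
  {π : Module.Dual k V →ₗ[k] V} {ψ : V →ₗ[k] V →ₗ[k] V →ₗ[k] k}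

theorem xiForm_apply_eq_trace_psiEndo (hψ₁₂ : ∀ X Y : V, ψ X X Y = 0)
    (hψ₁₃ : ∀ X Y : V, ψ X Y X = 0) (b : Module.Basis ι k V) (α : Module.Dual k V) :
    xiForm π ψ b (π α) = LinearMap.trace k (Module.Dual k V) (PsiEndo π ψ α) := by
  rw [b.trace_dual_eq_sum_coord, xiForm, LinearMap.sum_apply]
  exact Finset.sum_congr rfl fun i _ ↦ ψ.trilinear_rotate hψ₁₂ hψ₁₃ _ _ _

theorem apply_xiForm_eq_neg_trace_psiEndo (hπ : ∀ α β : Module.Dual k V, α (π β) = -β (π α))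
    (hψ₁₂ : ∀ X Y : V, ψ X X Y = 0) (hψ₁₃ : ∀ X Y : V, ψ X Y X = 0)
    (b : Module.Basis ι k V) (α : Module.Dual k V) :
    α (π (xiForm π ψ b)) = -LinearMap.trace k (Module.Dual k V) (PsiEndo π ψ α) := by
  rw [hπ, xiForm_apply_eq_trace_psiEndo hψ₁₂ hψ₁₃]

theorem pi_xiForm_eq_of_basis {ι' : Type*} [Fintype ι']
    (hπ : ∀ α β : Module.Dual k V, α (π β) = -β (π α))
    (hψ₁₂ : ∀ X Y : V, ψ X X Y = 0) (hψ₁₃ : ∀ X Y : V, ψ X Y X = 0)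
    (b : Module.Basis ι k V) (b' : Module.Basis ι' k V) :
    π (xiForm π ψ b) = π (xiForm π ψ b') :=
  b.ext_elem fun i ↦ by
    simpa only [Module.Basis.coord_apply] using
      (apply_xiForm_eq_neg_trace_psiEndo hπ hψ₁₂ hψ₁₃ b (b.coord i)).trans
        (apply_xiForm_eq_neg_trace_psiEndo hπ hψ₁₂ hψ₁₃ b' _).symm

end XiForm

theorem pairing_with_Y_eq_neg_trace_general {k V ι : Type*} [Field k] [AddCommGroup V] [Module k V]
    [Fintype ι]
    (π : Module.Dual k V →ₗ[k] V)
    (hπ : ∀ α β : Module.Dual k V, α (π β) = - β (π α))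
    (ψ : V →ₗ[k] V →ₗ[k] V →ₗ[k] k)
    (hψ₁ : ∀ X Y : V, ψ X X Y = 0)
    (hψ₃ : ∀ X Y : V, ψ X Y X = 0)
    (b : Module.Basis ι k V) :
    (∀ α : Module.Dual k V,
        α (π (xiForm π ψ b))
          = - LinearMap.trace k (Module.Dual k V) (PsiEndo π ψ α))
    ∧ (∀ (ι' : Type) [Fintype ι'], ∀ b' : Module.Basis ι' k V,
        π (xiForm π ψ b) = π (xiForm π ψ b')) :=
  ⟨apply_xiForm_eq_neg_trace_psiEndo hπ hψ₁ hψ₃ b,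
    fun _ _ b' ↦ pi_xiForm_eq_of_basis hπ hψ₁ hψ₃ b b'⟩

/-- For a skew-symmetric `π : V* → V` and an alternating trilinear form `ψ` on a
finite-dimensional space, `α(π ξ) = −Tr(Ψ_α)` for every `α`; in particular the vector
`π ξ` is independent of the choice of basis. -/
theorem pairing_with_Y_eq_neg_trace {k V ι : Type*} [Field k] [AddCommGroup V] [Module k V]
    [Fintype ι]
    (π : Module.Dual k V →ₗ[k] V)
    (hπ : ∀ α β : Module.Dual k V, α (π β) = - β (π α))
    (ψ : V →ₗ[k] V →ₗ[k] V →ₗ[k] k)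
    (hψ₁ : ∀ X Y : V, ψ X X Y = 0)
    (hψ₂ : ∀ X Y : V, ψ X Y Y = 0)
    (hψ₃ : ∀ X Y : V, ψ X Y X = 0)
    (b : Module.Basis ι k V) :
    (∀ α : Module.Dual k V,
        α (π (xiForm π ψ b))
          = - LinearMap.trace k (Module.Dual k V) (PsiEndo π ψ α))
    ∧ (∀ (ι' : Type) [Fintype ι'], ∀ b' : Module.Basis ι' k V,
        π (xiForm π ψ b) = π (xiForm π ψ b')) :=
  pairing_with_Y_eq_neg_trace_general π hπ ψ hψ₁ hψ₃ b
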